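/- arXiv:1702.05127 — 3 statements merged into one kernel-verified Lean document; each statement's English description precedes it below -/
import Mathlib

section
/- Let L ⊆ ℝ^m be a linear subspace and let σ be a nonzero sign vector in the oriented matroid O_L. Let u(σ) ∈ ℝ^m be the vector with u(σ)_i = 1 if σ_i = +, u(σ)_i = −1 if σ_i = −, and u(σ)_i = 0 if σ_i = 0. Then the l∞-distance from −u(σ) to L equals 1, the zero vector is an l∞-closest point of L to −u(σ), and type_L(−u(σ)) = σ. -/
/-! Pick a covector `c` vanishing on `L` with `sign c = σ`. For every `y ∈ L`,
`⟪c, y + u(σ)⟫ = ⟪c, u(σ)⟫ = ‖c‖₁`, while `⟪c, y + u(σ)⟫ ≤ ‖c‖₁ · d(-u(σ), y)`; hence every point of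
`L` is at distance at least `1` from `-u(σ)`, and the origin attains it. At a closest point `y`
the inequality is an equality, which forces `y_i + u(σ)_i = σ_i`, i.e. `y_i = 0`, wherever
`σ_i ≠ 0`; so every closest point sits on the face of the cube around `-u(σ)` given by `σ`,
and the origin shows that no coordinate with `σ_i = 0` is pinned. -/

/-- The set of points of `S` that are `l∞`-closest to `x` (the `Fin m → ℝ` metric is
the sup metric). -/
noncomputable def closestPts {m : ℕ} (x : Fin m → ℝ) (S : Set (Fin m → ℝ)) :
    Set (Fin m → ℝ) :=
  {y ∈ S | dist x y = Metric.infDist x S}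

open scoped Classical in
/-- The type of `x` with respect to a linear subspace `L`: the sign vector of the minimal
face of the cube of radius `d(x,L)` around `x` containing the set of closest points;
defined to be the zero sign vector when `x ∈ L`. -/
noncomputable def typeL {m : ℕ} (L : Submodule ℝ (Fin m → ℝ)) (x : Fin m → ℝ) :
    Fin m → SignType := fun i =>
  if x ∈ L then 0
  else if ∀ y ∈ closestPts x (L : Set (Fin m → ℝ)),
      y i = x i + Metric.infDist x (L : Set (Fin m → ℝ)) then 1
  else if ∀ y ∈ closestPts x (L : Set (Fin m → ℝ)),
      y i = x i - Metric.infDist x (L : Set (Fin m → ℝ)) then -1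
  else 0

/-- Membership in the oriented matroid associated to `L`: `σ` is the sign vector of some
linear functional vanishing on `L`. -/
def inOM {m : ℕ} (L : Submodule ℝ (Fin m → ℝ)) (σ : Fin m → SignType) : Prop :=
  ∃ c : Fin m → ℝ, (∀ y ∈ L, ∑ i, c i * y i = 0) ∧ ∀ i, SignType.sign (c i) = σ i


/-- `u(σ)`: the vector with entries `1, -1, 0` according to the sign vector `σ`. -/
noncomputable def uVec {m : ℕ} (σ : Fin m → SignType) : Fin m → ℝ := fun i => (σ i : ℝ)

open Finset

section SupDistance

variable {ι : Type*} [Fintype ι]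

theorem sum_mul_sub_le_sum_abs_mul_dist (c x y : ι → ℝ) :
    ∑ i, c i * (y i - x i) ≤ (∑ i, |c i|) * dist x y := by
  rw [sum_mul]
  refine sum_le_sum fun i _ => ?_
  calc c i * (y i - x i) ≤ |c i| * |y i - x i| := (le_abs_self _).trans (abs_mul _ _).le
    _ ≤ |c i| * dist x y := by
      gcongr
      rw [abs_sub_comm, ← Real.dist_eq]
      exact dist_le_pi_dist x y i

theorem eq_sign_of_sum_mul_eq_sum_abs {c z : ι → ℝ} (hz : ∀ i, |z i| ≤ 1)
    (h : ∑ i, c i * z i = ∑ i, |c i|) {i : ι} (hi : c i ≠ 0) :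
    z i = SignType.sign (c i) := by
  have hle : ∀ j ∈ univ, c j * z j ≤ |c j| := fun j _ =>
    calc c j * z j ≤ |c j| * |z j| := (le_abs_self _).trans (abs_mul _ _).le
      _ ≤ |c j| := mul_le_of_le_one_right (abs_nonneg _) (hz j)
  refine mul_left_cancel₀ hi ?_
  rw [self_mul_sign]
  exact (sum_eq_sum_iff_of_le hle).mp h i (mem_univ i)

end SupDistance

section NegUVec

variable {m : ℕ} {L : Submodule ℝ (Fin m → ℝ)} {σ : Fin m → SignType} {c : Fin m → ℝ}

theorem dist_neg_uVec_zero_le_one (σ : Fin m → SignType) : dist (-uVec σ) 0 ≤ 1 := by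
  rw [dist_zero_right, norm_neg, pi_norm_le_iff_of_nonneg zero_le_one]
  intro i
  rcases hσi : σ i with _ | _ | _ <;> simp [uVec, hσi]

theorem sum_mul_sub_neg_uVec (hc : ∀ y ∈ L, ∑ i, c i * y i = 0)
    (hsign : ∀ i, SignType.sign (c i) = σ i) {y : Fin m → ℝ} (hy : y ∈ L) :
    ∑ i, c i * (y i - (-uVec σ) i) = ∑ i, |c i| := by
  simp only [Pi.neg_apply, sub_neg_eq_add, mul_add, sum_add_distrib, hc y hy, zero_add, uVec,
    ← hsign, self_mul_sign]

theorem one_le_dist_neg_uVec (hc : ∀ y ∈ L, ∑ i, c i * y i = 0)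
    (hsign : ∀ i, SignType.sign (c i) = σ i) (hσ : σ ≠ 0) {y : Fin m → ℝ} (hy : y ∈ L) :
    1 ≤ dist (-uVec σ) y := by
  obtain ⟨i, hi⟩ := Function.ne_iff.mp hσ
  have hpos : 0 < ∑ i, |c i| := sum_pos' (fun j _ => abs_nonneg _)
    ⟨i, mem_univ i, abs_pos.mpr fun h => hi (by rw [← hsign, h, sign_zero]; rfl)⟩
  have h := sum_mul_sub_le_sum_abs_mul_dist c (-uVec σ) y
  rw [sum_mul_sub_neg_uVec hc hsign hy] at h
  nlinarith

theorem neg_uVec_notMem (hc : ∀ y ∈ L, ∑ i, c i * y i = 0)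
    (hsign : ∀ i, SignType.sign (c i) = σ i) (hσ : σ ≠ 0) : -uVec σ ∉ L := fun h => by
  have := one_le_dist_neg_uVec hc hsign hσ h
  norm_num at this

theorem infDist_neg_uVec (hc : ∀ y ∈ L, ∑ i, c i * y i = 0)
    (hsign : ∀ i, SignType.sign (c i) = σ i) (hσ : σ ≠ 0) :
    Metric.infDist (-uVec σ) (L : Set (Fin m → ℝ)) = 1 :=
  le_antisymm ((Metric.infDist_le_dist_of_mem L.zero_mem).trans (dist_neg_uVec_zero_le_one σ))
    ((Metric.le_infDist ⟨0, L.zero_mem⟩).2 fun _ hy => one_le_dist_neg_uVec hc hsign hσ hy)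

theorem zero_mem_closestPts_neg_uVec (hc : ∀ y ∈ L, ∑ i, c i * y i = 0)
    (hsign : ∀ i, SignType.sign (c i) = σ i) (hσ : σ ≠ 0) :
    (0 : Fin m → ℝ) ∈ closestPts (-uVec σ) (L : Set (Fin m → ℝ)) := by
  refine ⟨L.zero_mem, le_antisymm ?_ (Metric.infDist_le_dist_of_mem L.zero_mem)⟩
  rw [infDist_neg_uVec hc hsign hσ]
  exact dist_neg_uVec_zero_le_one σ

theorem apply_eq_zero_of_mem_closestPts_neg_uVec (hc : ∀ y ∈ L, ∑ i, c i * y i = 0)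
    (hsign : ∀ i, SignType.sign (c i) = σ i) {y : Fin m → ℝ}
    (hy : y ∈ closestPts (-uVec σ) (L : Set (Fin m → ℝ))) {i : Fin m} (hi : σ i ≠ 0) :
    y i = 0 := by
  have hd : dist (-uVec σ) y ≤ 1 := hy.2 ▸
    (Metric.infDist_le_dist_of_mem L.zero_mem).trans (dist_neg_uVec_zero_le_one σ)
  have hz : ∀ j, |y j - (-uVec σ) j| ≤ 1 := fun j => by
    rw [abs_sub_comm, ← Real.dist_eq]
    exact (dist_le_pi_dist _ _ j).trans hd
  have h := eq_sign_of_sum_mul_eq_sum_abs hz (sum_mul_sub_neg_uVec hc hsign hy.1)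
    (i := i) (fun h => hi (by rw [← hsign, h, sign_zero]))
  simpa [uVec, hsign] using h

theorem typeL_neg_uVec (hc : ∀ y ∈ L, ∑ i, c i * y i = 0)
    (hsign : ∀ i, SignType.sign (c i) = σ i) (hσ : σ ≠ 0) : typeL L (-uVec σ) = σ := by
  have hr := infDist_neg_uVec hc hsign hσ
  have h0 := zero_mem_closestPts_neg_uVec hc hsign hσ
  have hclosest : ∀ y ∈ closestPts (-uVec σ) (L : Set (Fin m → ℝ)), ∀ i, σ i ≠ 0 → y i = 0 :=
    fun y hy i hi => apply_eq_zero_of_mem_closestPts_neg_uVec hc hsign hy hi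
  funext i
  simp only [typeL, if_neg (neg_uVec_notMem hc hsign hσ)]
  rcases hσi : σ i with _ | _ | _
  · rw [if_neg, if_neg]
    · rfl
    all_goals exact fun h => absurd (h 0 h0) (by norm_num [uVec, hσi, hr])
  · rw [if_neg, if_pos]
    · rfl
    · exact fun y hy => by simp [hclosest y hy i (by simp [hσi]), uVec, hσi, hr]
    · exact fun h => absurd (h 0 h0) (by norm_num [uVec, hσi, hr])
  · rw [if_pos]
    · rfl
    · exact fun y hy => by simp [hclosest y hy i (by simp [hσi]), uVec, hσi, hr]

end NegUVec

/-- for a nonzero sign vector `σ` in the oriented matroid of `L`,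
`d(-u(σ), L) = 1`, the origin is an `l∞`-closest point of `L` to `-u(σ)`, and
`type_L(-u(σ)) = σ`. -/
theorem type_of_neg_uVec (m : ℕ) (L : Submodule ℝ (Fin m → ℝ)) (σ : Fin m → SignType)
    (hσ : σ ≠ 0) (hmem : inOM L σ) :
    Metric.infDist (-uVec σ) (L : Set (Fin m → ℝ)) = 1 ∧
    (0 : Fin m → ℝ) ∈ closestPts (-uVec σ) (L : Set (Fin m → ℝ)) ∧
    typeL L (-uVec σ) = σ := by
  obtain ⟨c, hc, hsign⟩ := hmem
  exact ⟨infDist_neg_uVec hc hsign hσ, zero_mem_closestPts_neg_uVec hc hsign hσ,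
    typeL_neg_uVec hc hsign hσ⟩
end

section
/- Let L ⊆ ℝ^m be a linear subspace of dimension d and let x ∈ ℝ^m with x ∉ L. Then the set C(x,L) of l∞-closest points to x in L is a nonempty convex set whose affine hull has dimension d − rank(type_L(x)), where rank(σ) is the rank of σ with respect to L. -/
/-- The rank of a sign vector `σ` with respect to `L`: the minimum cardinality of a subset
`S` of the support of `σ` such that every `y ∈ L` vanishing on `S` vanishes on the whole
support of `σ`. -/
noncomputable def rankSign {m : ℕ} (L : Submodule ℝ (Fin m → ℝ)) (σ : Fin m → SignType) : ℕ :=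
  sInf {k : ℕ | ∃ S : Finset (Fin m), S.card = k ∧ (∀ i ∈ S, σ i ≠ 0) ∧
    ∀ y ∈ L, (∀ i ∈ S, y i = 0) → ∀ j, σ j ≠ 0 → y j = 0}

open Module Submodule

section CoordinateRank

variable {K V ι : Type*} [Field K] [AddCommGroup V] [Module K V]

theorem mem_dualCoannihilator_span_image {f : ι → Dual K V} {s : Set ι} {v : V} :
    v ∈ (span K (f '' s)).dualCoannihilator ↔ ∀ i ∈ s, f i v = 0 := by
  rw [← SetLike.mem_coe, coe_dualCoannihilator_span, Set.mem_ofPred_eq, Set.forall_mem_image]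

variable [FiniteDimensional K V]

theorem finrank_span_image_le_card (f : ι → Dual K V) {S : Finset ι} {T : Set ι}
    (hST : ∀ v, (∀ i ∈ S, f i v = 0) → ∀ j ∈ T, f j v = 0) :
    finrank K (span K (f '' T)) ≤ S.card := by
  classical
  have hker : (span K (f '' S)).dualCoannihilator ≤ (span K (f '' T)).dualCoannihilator := by
    intro v hv
    rw [mem_dualCoannihilator_span_image] at hv ⊢
    exact hST v hv
  have hS := Subspace.finrank_add_finrank_dualCoannihilator_eq (span K (f '' S))
  have hT := Subspace.finrank_add_finrank_dualCoannihilator_eq (span K (f '' T))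
  have hSle : finrank K (span K (f '' S)) ≤ S.card := by
    rw [← Finset.coe_image]
    exact (finrank_span_finset_le_card _).trans Finset.card_image_le
  have := Submodule.finrank_mono hker
  omega

theorem exists_finset_card_eq_finrank_span (f : ι → Dual K V) (T : Set ι) :
    ∃ S : Finset ι, S.card = finrank K (span K (f '' T)) ∧ (∀ i ∈ S, i ∈ T) ∧
      ∀ v, (∀ i ∈ S, f i v = 0) → ∀ j ∈ T, f j v = 0 := by
  obtain ⟨κ, a, ha, hspan, hli⟩ := exists_linearIndependent' K (fun i : T => f i)
  have : Fintype κ := @Fintype.ofFinite _ hli.finite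
  rw [Set.image_eq_range, ← hspan, finrank_span_eq_card hli]
  refine ⟨Finset.univ.map ⟨Subtype.val ∘ a, Subtype.val_injective.comp ha⟩, by simp, ?_, ?_⟩
  · simp
  · intro v hv j hj
    have hv' : v ∈ (span K (Set.range ((fun i : T => f i) ∘ a))).dualCoannihilator := by
      rw [← SetLike.mem_coe, coe_dualCoannihilator_span]
      rintro _ ⟨k, rfl⟩
      exact hv _ (by simp)
    rw [hspan, ← SetLike.mem_coe, coe_dualCoannihilator_span] at hv'
    exact hv' _ ⟨⟨j, hj⟩, rfl⟩

theorem sInf_card_eq_finrank_span (f : ι → Dual K V) (T : Set ι) :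
    sInf {k : ℕ | ∃ S : Finset ι, S.card = k ∧ (∀ i ∈ S, i ∈ T) ∧
      ∀ v, (∀ i ∈ S, f i v = 0) → ∀ j ∈ T, f j v = 0} = finrank K (span K (f '' T)) := by
  obtain ⟨S, hS⟩ := exists_finset_card_eq_finrank_span f T
  refine le_antisymm (Nat.sInf_le ⟨S, hS⟩) (le_csInf ⟨_, S, hS⟩ ?_)
  rintro k ⟨S', rfl, -, hS'⟩
  exact finrank_span_image_le_card f hS'

end CoordinateRank

section VanishingSubspace

variable {K ι : Type*} [Field K]

def vanishingSubspace (L : Submodule K (ι → K)) (s : Set ι) : Submodule K (ι → K) :=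
  L ⊓ ⨅ i ∈ s, LinearMap.ker (LinearMap.proj i)

theorem mem_vanishingSubspace {L : Submodule K (ι → K)} {s : Set ι} {v : ι → K} :
    v ∈ vanishingSubspace L s ↔ v ∈ L ∧ ∀ i ∈ s, v i = 0 := by
  simp [vanishingSubspace]

theorem finrank_vanishingSubspace_add_finrank_span [Finite ι] (L : Submodule K (ι → K))
    (s : Set ι) :
    finrank K (vanishingSubspace L s) +
      finrank K (span K ((fun i => LinearMap.proj i ∘ₗ L.subtype) '' s)) = finrank K L := by
  have hmap : vanishingSubspace L s =
      (span K ((fun i => LinearMap.proj i ∘ₗ L.subtype) '' s)).dualCoannihilator.map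
        L.subtype := by
    ext v
    rw [mem_vanishingSubspace, mem_map]
    constructor
    · rintro ⟨hvL, hv⟩
      exact ⟨⟨v, hvL⟩, mem_dualCoannihilator_span_image.2 hv, rfl⟩
    · rintro ⟨u, hu, rfl⟩
      exact ⟨u.2, mem_dualCoannihilator_span_image.1 hu⟩
  rw [hmap, finrank_map_subtype_eq, add_comm, Subspace.finrank_add_finrank_dualCoannihilator_eq]

end VanishingSubspace

theorem rankSign_add_finrank_vanishingSubspace {m : ℕ} (L : Submodule ℝ (Fin m → ℝ))
    (σ : Fin m → SignType) :
    rankSign L σ + finrank ℝ (vanishingSubspace L {i | σ i ≠ 0}) = finrank ℝ L := by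
  rw [← finrank_vanishingSubspace_add_finrank_span L, add_comm,
    ← sInf_card_eq_finrank_span _ {i | σ i ≠ 0}]
  simp [rankSign]

open Metric Filter Topology

theorem exists_mem_forall_lt_of_convexOn {E ι : Type*} [AddCommGroup E] [Module ℝ E]
    {C : Set E} (hC : Convex ℝ C) (hne : C.Nonempty) {g : ι → E → ℝ} {c : ι → ℝ}
    (s : Finset ι) (hg : ∀ j ∈ s, ConvexOn ℝ C (g j)) (hle : ∀ j ∈ s, ∀ y ∈ C, g j y ≤ c j)
    (hlt : ∀ j ∈ s, ∃ y ∈ C, g j y < c j) :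
    ∃ y ∈ C, ∀ j ∈ s, g j y < c j := by
  classical
  induction s using Finset.induction_on with
  | empty =>
    obtain ⟨y, hy⟩ := hne
    exact ⟨y, hy, by simp⟩
  | insert j s _ ih =>
    simp only [Finset.mem_insert, forall_eq_or_imp] at hg hle hlt ⊢
    obtain ⟨y, hyC, hy⟩ := ih hg.2 hle.2 hlt.2
    obtain ⟨z, hzC, hz⟩ := hlt.1
    have hhalf : (0 : ℝ) ≤ 1 / 2 := by norm_num
    have hsum : (1 / 2 : ℝ) + 1 / 2 = 1 := by norm_num
    have hmid : ∀ k, ConvexOn ℝ C (g k) → g k y ≤ c k → g k z ≤ c k →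
        g k y < c k ∨ g k z < c k → g k ((1 / 2 : ℝ) • y + (1 / 2 : ℝ) • z) < c k := by
      intro k hk hky hkz hstrict
      have := hk.2 hyC hzC hhalf hhalf hsum
      simp only [smul_eq_mul] at this
      rcases hstrict with h | h <;> linarith
    refine ⟨_, hC hyC hzC hhalf hhalf hsum, ?_, fun k hk => ?_⟩
    · exact hmid j hg.1 (hle.1 y hyC) (hle.1 z hzC) (Or.inr hz)
    · exact hmid k (hg.2 k hk) (hle.2 k hk y hyC) (hle.2 k hk z hzC) (Or.inl (hy k hk))

theorem mem_vectorSpan_of_eventually_add_smul_mem {E : Type*} [AddCommGroup E] [Module ℝ E]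
    {C : Set E} {y v : E} (hy : y ∈ C) (h : ∀ᶠ t : ℝ in 𝓝 0, y + t • v ∈ C) :
    v ∈ vectorSpan ℝ C := by
  obtain ⟨t, htC, ht⟩ := ((h.filter_mono (nhdsWithin_le_nhds (s := {0}ᶜ))).and
    self_mem_nhdsWithin).exists
  have : t • v ∈ vectorSpan ℝ C := by
    simpa using vsub_mem_vectorSpan ℝ htC hy
  simpa [inv_smul_smul₀ (show t ≠ 0 from ht)] using (vectorSpan ℝ C).smul_mem t⁻¹ this

section ClosestPoints

variable {m : ℕ} {x y z : Fin m → ℝ}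

theorem mem_closestPts_iff {S : Set (Fin m → ℝ)} :
    y ∈ closestPts x S ↔ y ∈ S ∧ ∀ i, |y i - x i| ≤ infDist x S := by
  have hcoord : ∀ i, |y i - x i| = dist (x i) (y i) := fun i => by
    rw [Real.dist_eq, abs_sub_comm]
  simp only [closestPts, Set.mem_ofPred_eq, hcoord, and_congr_right_iff]
  intro hy
  rw [← dist_pi_le_iff infDist_nonneg, (infDist_le_dist_of_mem hy).ge_iff_eq', eq_comm]

theorem closestPts_nonempty {S : Set (Fin m → ℝ)} (hS : IsClosed S) (hne : S.Nonempty) :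
    (closestPts x S).Nonempty := by
  obtain ⟨y, hy, hxy⟩ := hS.exists_infDist_eq_dist hne x
  exact ⟨y, hy, hxy.symm⟩

theorem convex_closestPts {S : Set (Fin m → ℝ)} (hS : Convex ℝ S) :
    Convex ℝ (closestPts x S) := by
  have : closestPts x S = S ∩ closedBall x (infDist x S) := by
    ext y
    simp only [mem_closestPts_iff, Set.mem_inter_iff, mem_closedBall,
      dist_pi_le_iff infDist_nonneg, Real.dist_eq]
  rw [this]
  exact hS.inter (convex_closedBall x _)

theorem convexOn_abs_sub_apply {C : Set (Fin m → ℝ)} (hC : Convex ℝ C) (i : Fin m) :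
    ConvexOn ℝ C (fun y => |y i - x i|) := by
  exact ((convexOn_norm convex_univ).comp_affineMap
    ((LinearMap.proj i : (Fin m → ℝ) →ₗ[ℝ] ℝ).toAffineMap - AffineMap.const ℝ _ (x i))).subset
    (Set.subset_univ _) hC

variable {L : Submodule ℝ (Fin m → ℝ)}

theorem typeL_ne_zero_iff (hx : x ∉ L) (i : Fin m) :
    typeL L x i ≠ 0 ↔
      (∀ y ∈ closestPts x L, y i = x i + infDist x L) ∨
        ∀ y ∈ closestPts x L, y i = x i - infDist x L := by
  unfold typeL
  rw [if_neg hx]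
  split_ifs <;> simp_all

theorem apply_eq_of_typeL_ne_zero (hx : x ∉ L) {i : Fin m} (hi : typeL L x i ≠ 0)
    (hy : y ∈ closestPts x L) (hz : z ∈ closestPts x L) : y i = z i := by
  rcases (typeL_ne_zero_iff hx i).1 hi with h | h <;> rw [h y hy, h z hz]

theorem exists_mem_closestPts_abs_sub_lt (hx : x ∉ L) {i : Fin m} (hi : typeL L x i = 0) :
    ∃ w ∈ closestPts x L, |w i - x i| < infDist x L := by
  obtain ⟨hplus, hminus⟩ := not_or.1 ((typeL_ne_zero_iff hx i).not.1 (not_not.2 hi))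
  obtain ⟨y, hy, hyi⟩ := not_forall₂.1 hplus
  obtain ⟨z, hz, hzi⟩ := not_forall₂.1 hminus
  have hyb := abs_le.1 ((mem_closestPts_iff.1 hy).2 i)
  have hzb := abs_le.1 ((mem_closestPts_iff.1 hz).2 i)
  have hy' : y i - x i < infDist x L := lt_of_le_of_ne hyb.2 (by contrapose! hyi; linarith)
  have hz' : -infDist x L < z i - x i := lt_of_le_of_ne hzb.1 (by contrapose! hzi; linarith)
  refine ⟨(1 / 2 : ℝ) • y + (1 / 2 : ℝ) • z,
    convex_closestPts L.convex hy hz (by norm_num) (by norm_num) (by norm_num), ?_⟩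
  simp only [Pi.add_apply, Pi.smul_apply, smul_eq_mul, abs_lt]
  constructor <;> linarith

theorem exists_mem_closestPts_forall_abs_sub_lt (hx : x ∉ L) :
    ∃ y ∈ closestPts x L, ∀ i, typeL L x i = 0 → |y i - x i| < infDist x L := by
  have hC := convex_closestPts (x := x) L.convex
  obtain ⟨y, hy, hlt⟩ := exists_mem_forall_lt_of_convexOn hC
    (closestPts_nonempty L.closed_of_finiteDimensional ⟨0, L.zero_mem⟩)
    (Finset.univ.filter fun i => typeL L x i = 0) (fun i _ => convexOn_abs_sub_apply hC i)
    (fun i _ _ hy => (mem_closestPts_iff.1 hy).2 i)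
    (fun i hi => exists_mem_closestPts_abs_sub_lt hx (Finset.mem_filter.1 hi).2)
  exact ⟨y, hy, fun i hi => hlt i (by simpa using hi)⟩

theorem vectorSpan_closestPts (hx : x ∉ L) :
    vectorSpan ℝ (closestPts x L) = vanishingSubspace L {i | typeL L x i ≠ 0} := by
  apply le_antisymm
  · rw [vectorSpan_def, Submodule.span_le]
    rintro _ ⟨y, hy, z, hz, rfl⟩
    exact mem_vanishingSubspace.2 ⟨L.sub_mem hy.1 hz.1,
      fun i hi => sub_eq_zero.2 (apply_eq_of_typeL_ne_zero hx hi hy hz)⟩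
  · intro v hv
    obtain ⟨hvL, hv0⟩ := mem_vanishingSubspace.1 hv
    obtain ⟨y, hy, hint⟩ := exists_mem_closestPts_forall_abs_sub_lt hx
    refine mem_vectorSpan_of_eventually_add_smul_mem hy ?_
    -- `v` does not move the coordinates pinned by the type, and `y` is strictly inside the
    -- cube in all the others
    have hnear : ∀ᶠ t : ℝ in 𝓝 0, ∀ i, typeL L x i = 0 → |y i + t * v i - x i| < infDist x L := by
      refine Filter.eventually_all.2 fun i => ?_
      by_cases hi : typeL L x i = 0
      · have hcont : Continuous fun t : ℝ => |y i + t * v i - x i| := by fun_prop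
        have h0 : |y i + 0 * v i - x i| < infDist x L := by simpa using hint i hi
        filter_upwards [hcont.continuousAt.eventually_lt continuousAt_const h0]
          with t ht using fun _ => ht
      · exact Filter.Eventually.of_forall fun _ h => absurd h hi
    filter_upwards [hnear] with t ht
    refine mem_closestPts_iff.2 ⟨L.add_mem hy.1 (L.smul_mem t hvL), fun i => ?_⟩
    simp only [Pi.add_apply, Pi.smul_apply, smul_eq_mul]
    by_cases hi : typeL L x i = 0
    · exact (ht i hi).le
    · rw [hv0 i hi, mul_zero, add_zero]
      exact (mem_closestPts_iff.1 hy).2 i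

end ClosestPoints

/-- for `x ∉ L`, the set of `l∞`-closest points of `L` to `x` is a nonempty
convex set whose affine hull has dimension `d - rank(type_L(x))`, where `d = dim L`. -/
theorem dim_closestPts (m : ℕ) (L : Submodule ℝ (Fin m → ℝ)) (d : ℕ)
    (hd : Module.finrank ℝ L = d) (x : Fin m → ℝ) (hx : x ∉ L) :
    (closestPts x (L : Set (Fin m → ℝ))).Nonempty ∧
    Convex ℝ (closestPts x (L : Set (Fin m → ℝ))) ∧
    Module.finrank ℝ (affineSpan ℝ (closestPts x (L : Set (Fin m → ℝ)))).direction
      = d - rankSign L (typeL L x) := by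
  refine ⟨closestPts_nonempty L.closed_of_finiteDimensional ⟨0, L.zero_mem⟩,
    convex_closestPts L.convex, ?_⟩
  rw [direction_affineSpan, vectorSpan_closestPts hx, ← hd,
    ← rankSign_add_finrank_vanishingSubspace L (typeL L x)]
  omega
end

section
/- Let L ⊆ ℝ^m be a proper linear subspace and let σ be a nonzero sign vector in the oriented matroid O_L. Then the set {x ∈ ℝ^m : type_L(x) = σ} has nonempty interior in ℝ^m if and only if σ is a signed circuit of O_L, i.e., its support {i : σ_i ≠ 0} is minimal with respect to inclusion among supports of nonzero elements of O_L. -/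
/-!
For `c ⟂ L`, Hölder's inequality gives `|⟨c,x⟩| ≤ ‖c‖₁ d(x,L)`, and equality forces every
closest point to be `x + d(x,L) sign c` on the support of `c`.

If `x` has type `σ` and `c ⟂ L` is supported in `supp σ`, the closest points are pinned on
`supp σ`, which yields `⟨c,x⟩ + ⟨c,σ⟩ d(x,L) = 0`. Suppose this holds on a ball while `c`
vanishes at some `i ∈ supp σ`. Stepping along `σ` with the `i`-th coordinate frozen lowers
`d(·,L)` by less than the step, so `⟨c,σ⟩ = 0`; then `⟨c,·⟩` vanishes on the ball and `c = 0`.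
Hence a type fiber with interior points has circuit type.

Conversely, let `σ` be a circuit realised by `c` with `‖c‖₁ = 1`. Every functional vanishing
on `L + {z | z = 0 on supp σ}` is a multiple of `c`, so `c^⊥` lies in that sum, and a linear
choice of the `L`-component gives, for `x` near `-σ`, a point `y ∈ L` with `y = x + dσ` on
`supp σ` and `|x - y| < d` off it, where `d = -⟨c,x⟩`. Hölder's inequality shows
`d = d(x,L)`, its equality case pins all closest points on `supp σ`, and `y` shows that the
other coordinates are free: `x` has type `σ`.
-/

open Metric Topology

theorem Submodule.exists_linearMap_sub_mem_of_mem_sup {K V : Type*} [Field K] [AddCommGroup V]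
    [Module K V] (L N : Submodule K V) :
    ∃ g : V →ₗ[K] V, (∀ x, g x ∈ L) ∧ ∀ x ∈ L ⊔ N, x - g x ∈ N := by
  set F := L.subtype.coprod N.subtype
  have hF : LinearMap.range F = L ⊔ N := by
    simp only [F, LinearMap.range_coprod, Submodule.range_subtype]
  obtain ⟨s, hs⟩ := F.rangeRestrict.exists_rightInverse_of_surjective F.range_rangeRestrict
  obtain ⟨g, hg⟩ := ((LinearMap.fst K L N).comp s).exists_extend
  refine ⟨L.subtype.comp g, fun x => (g x).2, fun x hx => ?_⟩
  rw [← hF] at hx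
  have hsplit : x = (s ⟨x, hx⟩).1 + (s ⟨x, hx⟩).2 :=
    congrArg Subtype.val (LinearMap.congr_fun hs ⟨x, hx⟩).symm
  have hgx : g x = (s ⟨x, hx⟩).1 := LinearMap.congr_fun hg ⟨x, hx⟩
  simp only [LinearMap.comp_apply, Submodule.subtype_apply, hgx]
  nth_rw 1 [hsplit]
  simp

section Duality

variable {ι : Type*} [Fintype ι]

theorem abs_dotProduct_le (c z : ι → ℝ) : |c ⬝ᵥ z| ≤ (∑ i, |c i|) * ‖z‖ := by
  calc |c ⬝ᵥ z| ≤ ∑ i, |c i * z i| := Finset.abs_sum_le_sum_abs _ _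
    _ ≤ ∑ i, |c i| * ‖z‖ := by
        gcongr with i
        rw [abs_mul, ← Real.norm_eq_abs (z i)]
        gcongr
        exact norm_le_pi_norm z i
    _ = (∑ i, |c i|) * ‖z‖ := (Finset.sum_mul _ _ _).symm

theorem eq_sign_mul_of_dotProduct_eq {c z : ι → ℝ} {r : ℝ} (hz : ‖z‖ ≤ r)
    (hcz : c ⬝ᵥ z = (∑ i, |c i|) * r) {i : ι} (hci : c i ≠ 0) :
    z i = SignType.sign (c i) * r := by
  have hle : ∀ j ∈ Finset.univ, c j * z j ≤ |c j| * r := fun j _ =>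
    calc c j * z j ≤ |c j * z j| := le_abs_self _
      _ = |c j| * ‖z j‖ := by rw [abs_mul, Real.norm_eq_abs]
      _ ≤ |c j| * r := by gcongr; exact (norm_le_pi_norm z j).trans hz
  have hsum : ∑ j, c j * z j = ∑ j, |c j| * r := by rw [← Finset.sum_mul]; exact hcz
  have hi := (Finset.sum_eq_sum_iff_of_le hle).1 hsum i (Finset.mem_univ i)
  apply mul_left_cancel₀ hci
  rw [hi, ← mul_assoc, self_mul_sign]

end Duality

variable {m : ℕ}

theorem exists_mem_closestPts (L : Submodule ℝ (Fin m → ℝ)) (x : Fin m → ℝ) :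
    ∃ y, y ∈ closestPts x L := by
  obtain ⟨y, hyL, hy⟩ := L.closed_of_finiteDimensional.exists_infDist_eq_dist ⟨0, L.zero_mem⟩ x
  exact ⟨y, hyL, hy.symm⟩

theorem abs_dotProduct_le_mul_infDist {L : Submodule ℝ (Fin m → ℝ)} {c : Fin m → ℝ}
    (hcL : ∀ y ∈ L, c ⬝ᵥ y = 0) (x : Fin m → ℝ) :
    |c ⬝ᵥ x| ≤ (∑ i, |c i|) * infDist x L := by
  obtain ⟨y, hyL, hy⟩ := exists_mem_closestPts L x
  have hcx : c ⬝ᵥ x = c ⬝ᵥ (x - y) := by rw [dotProduct_sub, hcL y hyL, sub_zero]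
  rw [hcx, ← hy, dist_eq_norm]
  exact abs_dotProduct_le c (x - y)

theorem closestPts_apply_eq_of_dotProduct_eq {L : Submodule ℝ (Fin m → ℝ)} {c x : Fin m → ℝ}
    (hcL : ∀ y ∈ L, c ⬝ᵥ y = 0) (hcx : c ⬝ᵥ x = -((∑ i, |c i|) * infDist x L))
    {y : Fin m → ℝ} (hy : y ∈ closestPts x L) {i : Fin m} (hci : c i ≠ 0) :
    y i = x i + SignType.sign (c i) * infDist x L := by
  have hnorm : ‖y - x‖ ≤ infDist x L := by rw [← dist_eq_norm, dist_comm, hy.2]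
  have hdot : c ⬝ᵥ (y - x) = (∑ i, |c i|) * infDist x L := by
    rw [dotProduct_sub, hcL y hy.1, hcx]; ring
  have := eq_sign_mul_of_dotProduct_eq hnorm hdot hci
  rw [Pi.sub_apply] at this
  linarith

section TypeL

variable {L : Submodule ℝ (Fin m → ℝ)} {x : Fin m → ℝ} {σ : Fin m → SignType}

theorem infDist_pos_of_notMem (hx : x ∉ L) : 0 < infDist x L :=
  (L.closed_of_finiteDimensional.notMem_iff_infDist_pos ⟨0, L.zero_mem⟩).1 hx

theorem typeL_eq_of_closestPts (hx : x ∉ L)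
    (hpin : ∀ y ∈ closestPts x L, ∀ i, σ i ≠ 0 → y i = x i + σ i * infDist x L)
    (hfree : ∃ y ∈ closestPts x L, ∀ i, σ i = 0 → |x i - y i| < infDist x L) :
    typeL L x = σ := by
  obtain ⟨y₀, hy₀, hfree⟩ := hfree
  have hr := infDist_pos_of_notMem hx
  funext i
  simp only [typeL, if_neg hx]
  rcases hσi : σ i with _ | _ | _
  · have h := hfree i hσi
    rw [if_neg fun hall => by rw [hall y₀ hy₀] at h; simp [abs_of_pos hr] at h,
      if_neg fun hall => by rw [hall y₀ hy₀] at h; simp [abs_of_pos hr] at h]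
    rfl
  · have h := hpin y₀ hy₀ i (by simp [hσi])
    rw [hσi] at h
    rw [if_neg fun hall => by rw [hall y₀ hy₀] at h; norm_num at h; linarith,
      if_pos fun y hy => by rw [hpin y hy i (by simp [hσi]), hσi]; norm_num; ring]
    rfl
  · rw [if_pos fun y hy => by rw [hpin y hy i (by simp [hσi]), hσi]; norm_num]
    rfl

theorem closestPts_apply_eq_of_typeL (hx : typeL L x = σ) {y : Fin m → ℝ}
    (hy : y ∈ closestPts x L) {i : Fin m} (hi : σ i ≠ 0) :
    y i = x i + σ i * infDist x L := by
  subst hx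
  simp only [typeL] at hi ⊢
  split_ifs at hi ⊢ with hxL hpos hneg
  · exact absurd rfl hi
  · simpa using hpos y hy
  · simpa [sub_eq_add_neg] using hneg y hy
  · exact absurd rfl hi

end TypeL

theorem SignType.abs_coe_le_one {α : Type*} [Ring α] [LinearOrder α] [IsOrderedRing α]
    (s : SignType) : |(s : α)| ≤ 1 := by
  cases s <;> simp

theorem SignType.abs_coe_of_ne_zero {α : Type*} [Ring α] [LinearOrder α] [IsOrderedRing α]
    {s : SignType} (hs : s ≠ 0) : |(s : α)| = 1 := by
  cases s <;> simp_all

def signVec (σ : Fin m → SignType) : Fin m → ℝ := fun i => σ i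

theorem norm_signVec_le_one (σ : Fin m → SignType) : ‖signVec σ‖ ≤ 1 :=
  (pi_norm_le_iff_of_nonneg zero_le_one).2 fun i => SignType.abs_coe_le_one (σ i)

theorem dotProduct_signVec_sign (c : Fin m → ℝ) :
    c ⬝ᵥ signVec (fun i => SignType.sign (c i)) = ∑ i, |c i| :=
  Finset.sum_congr rfl fun i _ => self_mul_sign (c i)

section Interior

variable {L : Submodule ℝ (Fin m → ℝ)} {σ : Fin m → SignType} {c : Fin m → ℝ}

theorem dotProduct_add_mul_infDist_eq_zero {x : Fin m → ℝ} (hx : typeL L x = σ)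
    (hcL : ∀ y ∈ L, c ⬝ᵥ y = 0) (hcσ : ∀ i, σ i = 0 → c i = 0) :
    c ⬝ᵥ x + (c ⬝ᵥ signVec σ) * infDist x L = 0 := by
  obtain ⟨y, hy⟩ := exists_mem_closestPts L x
  rw [← hcL y hy.1, dotProduct, dotProduct, Finset.sum_mul, ← Finset.sum_add_distrib]
  refine Finset.sum_congr rfl fun i _ => ?_
  by_cases hσi : σ i = 0
  · simp [hcσ i hσi]
  · rw [closestPts_apply_eq_of_typeL hx hy hσi, signVec]
    ring

theorem infDist_sub_lt_infDist_of_typeL {x z : Fin m → ℝ} (hx : typeL L x = σ) {i : Fin m}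
    (hi : σ i ≠ 0) (hzi : z i = x i) {t : ℝ} (ht : 0 < t) (hxz : dist x z ≤ t) :
    infDist x L - t < infDist z L := by
  by_contra! hle
  obtain ⟨y, hyL, hzy⟩ := exists_mem_closestPts L z
  have hxy : dist x y ≤ infDist x L := by linarith [dist_triangle x z y]
  have hy : y ∈ closestPts x L :=
    ⟨hyL, le_antisymm hxy (infDist_le_dist_of_mem hyL)⟩
  have hfar : |x i - y i| = infDist x L := by
    rw [closestPts_apply_eq_of_typeL hx hy hi, sub_add_cancel_left, abs_neg, abs_mul,
      SignType.abs_coe_of_ne_zero hi, one_mul, abs_of_nonneg infDist_nonneg]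
  have hnear : |x i - y i| ≤ infDist z L := by
    rw [← hzi, ← hzy, ← Real.dist_eq]
    exact dist_le_pi_dist z y i
  linarith

theorem ne_zero_of_mem_interior {x₀ : Fin m → ℝ}
    (hx₀ : x₀ ∈ interior {x | typeL L x = σ}) (hcL : ∀ y ∈ L, c ⬝ᵥ y = 0)
    (hcσ : ∀ i, σ i = 0 → c i = 0) (hc : c ≠ 0) {i : Fin m} (hi : σ i ≠ 0) : c i ≠ 0 := by
  intro hci
  obtain ⟨ε, hε, hball⟩ := Metric.mem_nhds_iff.1 (mem_interior_iff_mem_nhds.1 hx₀)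
  obtain ⟨t, ht, htε⟩ : ∃ t, 0 < t ∧ t < ε := ⟨ε / 2, by positivity, by linarith⟩
  have hnear : ∀ w : Fin m → ℝ, ‖w‖ ≤ 1 → dist x₀ (x₀ + t • w) ≤ t := fun w hw => by
    rw [dist_self_add_right, norm_smul, Real.norm_of_nonneg ht.le]
    exact mul_le_of_le_one_right ht.le hw
  have hx₀K := dotProduct_add_mul_infDist_eq_zero (hball (mem_ball_self hε)) hcL hcσ
  set K := c ⬝ᵥ signVec σ
  have hlin : ∀ w : Fin m → ℝ, ‖w‖ ≤ 1 →
      c ⬝ᵥ x₀ + t * (c ⬝ᵥ w) + K * infDist (x₀ + t • w) L = 0 := fun w hw => by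
    have hw' : x₀ + t • w ∈ ball x₀ ε := by
      rw [mem_ball, dist_comm]; exact (hnear w hw).trans_lt htε
    have := dotProduct_add_mul_infDist_eq_zero (hball hw') hcL hcσ
    rwa [dotProduct_add, dotProduct_smul, smul_eq_mul] at this
  set v := signVec fun j => if c j = 0 then 0 else σ j
  have hcv : c ⬝ᵥ v = K :=
    Finset.sum_congr rfl fun j _ => by by_cases hcj : c j = 0 <;> simp [v, signVec, hcj]
  have hstep := infDist_sub_lt_infDist_of_typeL (hball (mem_ball_self hε)) hi
    (z := x₀ + t • v) (by simp [v, signVec, hci]) ht (hnear v (norm_signVec_le_one _))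
  have hK : K = 0 := by
    have := hlin v (norm_signVec_le_one _)
    rw [hcv] at this
    have hfac : K * (t + infDist (x₀ + t • v) L - infDist x₀ L) = 0 := by
      linear_combination this - hx₀K
    exact (mul_eq_zero.1 hfac).resolve_right (by linarith)
  have hsum := hlin _ (norm_signVec_le_one fun j => SignType.sign (c j))
  rw [dotProduct_signVec_sign, hK, zero_mul, add_zero] at hsum
  rw [hK, zero_mul, add_zero] at hx₀K
  have habs : ∑ j, |c j| = 0 := by
    rw [hx₀K, zero_add] at hsum
    exact (mul_eq_zero.1 hsum).resolve_left ht.ne'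
  exact hc (funext fun j => abs_eq_zero.1
    ((Finset.sum_eq_zero_iff_of_nonneg fun j _ => abs_nonneg (c j)).1 habs j (Finset.mem_univ j)))

end Interior

def zeroOn (σ : Fin m → SignType) : Submodule ℝ (Fin m → ℝ) :=
  Submodule.pi {i | σ i ≠ 0} fun _ => ⊥

theorem mem_zeroOn {σ : Fin m → SignType} {z : Fin m → ℝ} :
    z ∈ zeroOn σ ↔ ∀ i, σ i ≠ 0 → z i = 0 := by
  simp [zeroOn, Submodule.mem_pi]

def IsSignedCircuit (L : Submodule ℝ (Fin m → ℝ)) (σ : Fin m → SignType) : Prop :=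
  ∀ τ : Fin m → SignType, inOM L τ → τ ≠ 0 →
    {i | τ i ≠ 0} ⊆ {i | σ i ≠ 0} → {i | τ i ≠ 0} = {i | σ i ≠ 0}

theorem isSignedCircuit_of_interior_nonempty {L : Submodule ℝ (Fin m → ℝ)}
    {σ : Fin m → SignType} (h : (interior {x | typeL L x = σ}).Nonempty) :
    IsSignedCircuit L σ := by
  obtain ⟨x₀, hx₀⟩ := h
  rintro τ ⟨c, hcL, hcτ⟩ hτ hsub
  have hcσ : ∀ i, σ i = 0 → c i = 0 := fun i hi => by
    by_contra hci
    exact hsub (show τ i ≠ 0 by rwa [← hcτ i, sign_ne_zero]) hi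
  have hc : c ≠ 0 := fun hc => hτ (funext fun i => by simp [← hcτ i, hc])
  refine hsub.antisymm fun i hi => ?_
  rw [Set.mem_ofPred_eq, ← hcτ i, sign_ne_zero]
  exact ne_zero_of_mem_interior hx₀ hcL hcσ hc hi

section Circuit

variable {L : Submodule ℝ (Fin m → ℝ)} {σ : Fin m → SignType} {c : Fin m → ℝ}

theorem eq_smul_of_isSignedCircuit (hcirc : IsSignedCircuit L σ) (hcL : ∀ y ∈ L, c ⬝ᵥ y = 0)
    (hcσ : ∀ i, SignType.sign (c i) = σ i) {i₀ : Fin m} (hi₀ : σ i₀ ≠ 0) {w : Fin m → ℝ}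
    (hwL : ∀ y ∈ L, w ⬝ᵥ y = 0) (hwσ : ∀ i, σ i = 0 → w i = 0) :
    w = (w i₀ / c i₀) • c := by
  have hci₀ : c i₀ ≠ 0 := by rwa [← sign_ne_zero, hcσ]
  set d := c i₀ • w - w i₀ • c
  suffices hd : d = 0 by
    ext i
    have := congrFun hd i
    simp only [d, Pi.sub_apply, Pi.smul_apply, smul_eq_mul, Pi.zero_apply] at this
    rw [Pi.smul_apply, smul_eq_mul, div_mul_eq_mul_div, eq_div_iff hci₀]
    linarith
  by_contra hd
  have hdτ : inOM L fun i => SignType.sign (d i) :=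
    ⟨d, fun y hy => by
      change d ⬝ᵥ y = 0
      rw [sub_dotProduct, smul_dotProduct, smul_dotProduct, hwL y hy, hcL y hy]; simp,
     fun i => rfl⟩
  have hsub : {i | SignType.sign (d i) ≠ 0} ⊆ {i | σ i ≠ 0} := fun i hi hσi => by
    have hci : c i = 0 := by rw [← sign_eq_zero_iff, hcσ, hσi]
    simp [d, hwσ i hσi, hci] at hi
  have hτ : (fun i => SignType.sign (d i)) ≠ 0 := fun h =>
    hd (funext fun i => sign_eq_zero_iff.1 (congrFun h i))
  have := (hcirc _ hdτ hτ hsub).symm ▸ (show i₀ ∈ {i | σ i ≠ 0} from hi₀)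
  simp [d, mul_comm] at this

theorem mem_sup_zeroOn_of_isSignedCircuit (hcirc : IsSignedCircuit L σ)
    (hcL : ∀ y ∈ L, c ⬝ᵥ y = 0) (hcσ : ∀ i, SignType.sign (c i) = σ i) {i₀ : Fin m}
    (hi₀ : σ i₀ ≠ 0) {u : Fin m → ℝ} (hu : c ⬝ᵥ u = 0) : u ∈ L ⊔ zeroOn σ := by
  rw [← Subspace.dualAnnihilator_dualCoannihilator_eq (W := L ⊔ zeroOn σ),
    Submodule.mem_dualCoannihilator]
  intro ψ hψ
  rw [Submodule.mem_dualAnnihilator] at hψ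
  set w := (dotProductEquiv ℝ (Fin m)).symm ψ
  have hψw : ∀ z, ψ z = w ⬝ᵥ z := fun z => by
    rw [← (dotProductEquiv ℝ (Fin m)).apply_symm_apply ψ]; rfl
  have hwL : ∀ y ∈ L, w ⬝ᵥ y = 0 := fun y hy => by
    rw [← hψw]; exact hψ y (Submodule.mem_sup_left hy)
  have hwσ : ∀ i, σ i = 0 → w i = 0 := fun i hi => by
    have : Pi.single i 1 ∈ zeroOn σ :=
      mem_zeroOn.2 fun j hj => Pi.single_eq_of_ne (by rintro rfl; exact hj hi) 1
    simpa [hψw] using hψ _ (Submodule.mem_sup_right this)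
  rw [hψw, eq_smul_of_isSignedCircuit hcirc hcL hcσ hi₀ hwL hwσ, smul_dotProduct, hu,
    smul_zero]

end Circuit

section Certificate

variable {L : Submodule ℝ (Fin m → ℝ)} {σ : Fin m → SignType} {c : Fin m → ℝ}

theorem inOM.exists_sum_abs_eq_one (h : inOM L σ) (hσ : σ ≠ 0) :
    ∃ c : Fin m → ℝ, (∀ y ∈ L, c ⬝ᵥ y = 0) ∧ (∀ i, SignType.sign (c i) = σ i) ∧
      ∑ i, |c i| = 1 := by
  obtain ⟨c, hcL, hcσ⟩ := h
  obtain ⟨i, hi⟩ := Function.ne_iff.1 hσ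
  have hA : 0 < ∑ i, |c i| :=
    Finset.sum_pos' (fun j _ => abs_nonneg _) ⟨i, Finset.mem_univ i, by
      rwa [abs_pos, ← sign_ne_zero, hcσ]⟩
  refine ⟨(∑ i, |c i|)⁻¹ • c, fun y hy => ?_, fun j => ?_, ?_⟩
  · rw [smul_dotProduct]
    exact (congrArg _ (hcL y hy)).trans (smul_zero _)
  · rw [Pi.smul_apply, smul_eq_mul, sign_mul, sign_pos (inv_pos.2 hA), one_mul, hcσ]
  · simp_rw [Pi.smul_apply, smul_eq_mul, abs_mul, abs_of_pos (inv_pos.2 hA), ← Finset.mul_sum]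
    exact inv_mul_cancel₀ hA.ne'

theorem exists_linearMap_of_isSignedCircuit (hcirc : IsSignedCircuit L σ)
    (hcL : ∀ y ∈ L, c ⬝ᵥ y = 0) (hcσ : ∀ i, SignType.sign (c i) = σ i)
    (hc : c ⬝ᵥ signVec σ = 1) {i₀ : Fin m} (hi₀ : σ i₀ ≠ 0) :
    ∃ P : (Fin m → ℝ) →ₗ[ℝ] (Fin m → ℝ), (∀ x, P x ∈ L) ∧
      (∀ x i, σ i ≠ 0 → P x i = x i - (c ⬝ᵥ x) * σ i) ∧ P (signVec σ) = 0 := by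
  obtain ⟨g, hgL, hg⟩ := Submodule.exists_linearMap_sub_mem_of_mem_sup L (zeroOn σ)
  set Q := LinearMap.id - (dotProductEquiv ℝ (Fin m) c).smulRight (signVec σ)
  have hQ : ∀ x, Q x = x - (c ⬝ᵥ x) • signVec σ := fun x => rfl
  have hQc : ∀ x, c ⬝ᵥ Q x = 0 := fun x => by
    rw [hQ, dotProduct_sub, dotProduct_smul, hc, smul_eq_mul, mul_one, sub_self]
  refine ⟨g ∘ₗ Q, fun x => hgL _, fun x i hi => ?_, ?_⟩
  · have := mem_zeroOn.1
      (hg _ (mem_sup_zeroOn_of_isSignedCircuit hcirc hcL hcσ hi₀ (hQc x))) i hi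
    rw [Pi.sub_apply, sub_eq_zero] at this
    rw [LinearMap.comp_apply, ← this, hQ]
    simp [signVec]
  · rw [LinearMap.comp_apply, hQ, hc, one_smul, sub_self, map_zero]

theorem typeL_eq_of_certificate (hcL : ∀ y ∈ L, c ⬝ᵥ y = 0)
    (hcσ : ∀ i, SignType.sign (c i) = σ i) (hc : ∑ i, |c i| = 1) {x y : Fin m → ℝ}
    (hy : y ∈ L) (hr : 0 < -(c ⬝ᵥ x))
    (hpin : ∀ i, σ i ≠ 0 → y i = x i + σ i * -(c ⬝ᵥ x))
    (hfree : ∀ i, σ i = 0 → |x i - y i| < -(c ⬝ᵥ x)) : typeL L x = σ := by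
  set r := -(c ⬝ᵥ x)
  have hxy : dist x y ≤ r := (dist_pi_le_iff hr.le).2 fun i => by
    rw [Real.dist_eq]
    by_cases hi : σ i = 0
    · exact (hfree i hi).le
    · rw [hpin i hi, sub_add_cancel_left, abs_neg, abs_mul, SignType.abs_coe_of_ne_zero hi,
        one_mul, abs_of_pos hr]
  have hlow : r ≤ infDist x L := by
    simpa [hc] using (neg_le_abs _).trans (abs_dotProduct_le_mul_infDist hcL x)
  have hinf : infDist x L = r := le_antisymm ((infDist_le_dist_of_mem hy).trans hxy) hlow
  have hyC : y ∈ closestPts x L := ⟨hy, le_antisymm (hxy.trans_eq hinf.symm)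
    (infDist_le_dist_of_mem hy)⟩
  refine typeL_eq_of_closestPts (fun hxL => ?_) (fun y' hy' i hi => ?_) ⟨y, hyC, ?_⟩
  · exact hr.ne' (hinf ▸ infDist_zero_of_mem hxL)
  · rw [← hcσ i]
    refine closestPts_apply_eq_of_dotProduct_eq hcL (by rw [hc, hinf]; ring) hy' ?_
    rwa [← sign_ne_zero, hcσ]
  · simpa [hinf] using hfree

theorem interior_nonempty_of_isSignedCircuit (hσ : σ ≠ 0) (hmem : inOM L σ)
    (hcirc : IsSignedCircuit L σ) : (interior {x | typeL L x = σ}).Nonempty := by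
  obtain ⟨c, hcL, hcσ, hc⟩ := hmem.exists_sum_abs_eq_one hσ
  obtain ⟨i₀, hi₀⟩ := Function.ne_iff.1 hσ
  have hcσ' : c ⬝ᵥ signVec σ = 1 := by
    rw [← hc, ← dotProduct_signVec_sign]; simp_rw [hcσ]
  obtain ⟨P, hPL, hP, hPσ⟩ := exists_linearMap_of_isSignedCircuit hcirc hcL hcσ hcσ' hi₀
  have hPc : Continuous P := P.continuous_of_finiteDimensional
  have hcc : Continuous fun x => -(c ⬝ᵥ x) :=
    (dotProductEquiv ℝ (Fin m) c).continuous_of_finiteDimensional.neg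
  -- at `x₀ = -σ` the point `0 ∈ L` is a certificate, and certificates move continuously
  refine ⟨-signVec σ, mem_interior_iff_mem_nhds.2 ?_⟩
  have hx₀ : c ⬝ᵥ -signVec σ = -1 := by rw [dotProduct_neg, hcσ']
  have hpos : ∀ᶠ x in 𝓝 (-signVec σ), 0 < -(c ⬝ᵥ x) :=
    continuousAt_const.eventually_lt hcc.continuousAt (by rw [hx₀]; norm_num)
  have hfree : ∀ᶠ x in 𝓝 (-signVec σ), ∀ i, σ i = 0 → |x i - P x i| < -(c ⬝ᵥ x) := by
    refine Filter.eventually_all.2 fun i => ?_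
    by_cases hi : σ i = 0
    · refine Filter.Eventually.mono ?_ fun x hx _ => hx
      refine ContinuousAt.eventually_lt (by fun_prop) hcc.continuousAt ?_
      simp [hx₀, map_neg, hPσ, signVec, hi]
    · exact Filter.Eventually.of_forall fun x h => absurd h hi
  filter_upwards [hpos, hfree] with x hxpos hxfree
  exact typeL_eq_of_certificate hcL hcσ hc (hPL x) hxpos
    (fun i hi => by rw [hP x i hi]; ring) hxfree

end Certificate

theorem type_fiber_interior_iff_circuit_general (m : ℕ) (L : Submodule ℝ (Fin m → ℝ))
    (σ : Fin m → SignType) (hσ : σ ≠ 0) (hmem : inOM L σ) :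
    (interior {x : Fin m → ℝ | typeL L x = σ}).Nonempty ↔
      ∀ τ : Fin m → SignType, inOM L τ → τ ≠ 0 →
        {i | τ i ≠ 0} ⊆ {i | σ i ≠ 0} → {i | τ i ≠ 0} = {i | σ i ≠ 0} :=
  ⟨isSignedCircuit_of_interior_nonempty, interior_nonempty_of_isSignedCircuit hσ hmem⟩

/-- for a proper subspace `L` and a nonzero sign vector `σ ∈ O_L`, the set of
points of type `σ` has nonempty interior if and only if `σ` is a signed circuit of `O_L`,
i.e. its support is minimal among supports of nonzero elements of `O_L`. -/
theorem type_fiber_interior_iff_circuit (m : ℕ) (L : Submodule ℝ (Fin m → ℝ))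
    (hL : L ≠ ⊤) (σ : Fin m → SignType) (hσ : σ ≠ 0) (hmem : inOM L σ) :
    (interior {x : Fin m → ℝ | typeL L x = σ}).Nonempty ↔
      ∀ τ : Fin m → SignType, inOM L τ → τ ≠ 0 →
        {i | τ i ≠ 0} ⊆ {i | σ i ≠ 0} → {i | τ i ≠ 0} = {i | σ i ≠ 0} :=
  type_fiber_interior_iff_circuit_general m L σ hσ hmem
end
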